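/- Let α : ℝ → ℝ³ be a twice continuously differentiable unit-speed curve with unit tangent T(s) = α′(s), curvature κ(s) = ‖α″(s)‖ > 0, principal normal N(s) = α″(s)/κ(s), and binormal B(s) = T(s) × N(s). Let θ ∈ ℝ with sin θ > 0, and suppose a ∈ ℝ³ satisfies a = cos θ · T(s) + sin θ · B(s) for all s. For s₀ ∈ ℝ define ᾱ(s) = α(s₀) + sin θ · α(s) + (s − s₀) cos θ · a. Then the binormal of ᾱ, defined by B̄(s) = (ᾱ′(s) × ᾱ″(s))/‖ᾱ′(s) × ᾱ″(s)‖, satisfies for every s: B̄(s) = [−sin θ cos θ · T(s) + (sin θ + cos² θ) B(s)] / √(1 + 2 sin θ cos² θ). -/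

import Mathlib

/-! The velocity ᾱ′ = sin θ T + cos θ a lies in the rectifying plane, with coordinates
(sin θ + cos² θ, sin θ cos θ) in the orthonormal pair (T, B), while ᾱ″ = sin θ κ N. Since
T × N = B and B × N = −T, the cross product ᾱ′ × ᾱ″ is sin θ κ times
−sin θ cos θ T + (sin θ + cos² θ) B, whose squared length is 1 + 2 sin θ cos² θ once
sin² θ + cos² θ = 1 is used; the positive factor sin θ κ disappears on normalising. -/

open Real

noncomputable def cross3 (u v : EuclideanSpace ℝ (Fin 3)) : EuclideanSpace ℝ (Fin 3) :=
  WithLp.toLp 2 ![u 1 * v 2 - u 2 * v 1, u 2 * v 0 - u 0 * v 2, u 0 * v 1 - u 1 * v 0]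

open scoped RealInnerProductSpace

section CrossProduct

open Matrix

variable (u v w : EuclideanSpace ℝ (Fin 3))

lemma cross3_eq_toLp_crossProduct : cross3 u v = WithLp.toLp 2 (u.ofLp ⨯₃ v.ofLp) := rfl

lemma real_inner_eq_dotProduct {ι : Type*} [Fintype ι] (x y : EuclideanSpace ℝ ι) :
    ⟪x, y⟫ = x.ofLp ⬝ᵥ y.ofLp := by
  rw [EuclideanSpace.inner_eq_star_dotProduct, star_trivial, dotProduct_comm]

lemma cross3_add_left : cross3 (u + v) w = cross3 u w + cross3 v w := by
  simp [cross3_eq_toLp_crossProduct]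

lemma cross3_smul_left (c : ℝ) : cross3 (c • u) v = c • cross3 u v := by
  simp [cross3_eq_toLp_crossProduct]

lemma cross3_smul_right (c : ℝ) : cross3 u (c • v) = c • cross3 u v := by
  simp [cross3_eq_toLp_crossProduct]

lemma cross3_cross3 : cross3 (cross3 u v) w = ⟪u, w⟫ • v - ⟪v, w⟫ • u := by
  simp [cross3_eq_toLp_crossProduct, real_inner_eq_dotProduct, cross_cross_eq_smul_sub_smul]

lemma inner_self_cross3 : ⟪u, cross3 u v⟫ = 0 := by
  simp [cross3_eq_toLp_crossProduct, real_inner_eq_dotProduct, dot_self_cross]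

lemma inner_cross3_cross3 (x : EuclideanSpace ℝ (Fin 3)) :
    ⟪cross3 u v, cross3 w x⟫ = ⟪u, w⟫ * ⟪v, x⟫ - ⟪u, x⟫ * ⟪v, w⟫ := by
  simp [cross3_eq_toLp_crossProduct, real_inner_eq_dotProduct, cross_dot_cross]

variable {u v}

lemma norm_cross3_of_orthonormal (hu : ‖u‖ = 1) (hv : ‖v‖ = 1) (huv : ⟪u, v⟫ = 0) :
    ‖cross3 u v‖ = 1 := by
  have h := inner_cross3_cross3 u v u v
  rw [real_inner_self_eq_norm_sq, real_inner_self_eq_norm_sq, real_inner_self_eq_norm_sq,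
    real_inner_comm u v, huv, hu, hv] at h
  rw [← sq_eq_sq₀ (norm_nonneg _) zero_le_one, h]
  norm_num

lemma cross3_smul_add_smul_cross3 (hv : ‖v‖ = 1) (huv : ⟪u, v⟫ = 0) (x y : ℝ) :
    cross3 (x • u + y • cross3 u v) v = (-y) • u + x • cross3 u v := by
  rw [cross3_add_left, cross3_smul_left, cross3_smul_left, cross3_cross3,
    real_inner_self_eq_norm_sq, hv, huv]
  module

end CrossProduct

section

variable {F : Type*} [NormedAddCommGroup F] [InnerProductSpace ℝ F]

lemma norm_smul_add_smul_of_orthonormal {u w : F} (hu : ‖u‖ = 1) (hw : ‖w‖ = 1)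
    (huw : ⟪u, w⟫ = 0) (x y : ℝ) : ‖x • u + y • w‖ = √(x ^ 2 + y ^ 2) := by
  rw [← sqrt_sq (norm_nonneg _), norm_add_sq_real, norm_smul, norm_smul, real_inner_smul_left,
    real_inner_smul_right, huw, hu, hw, norm_eq_abs, norm_eq_abs]
  congr 1
  ring_nf
  rw [sq_abs, sq_abs]

lemma inv_norm_smul_smul_of_pos {r : ℝ} (hr : 0 < r) (x : F) :
    ‖r • x‖⁻¹ • (r • x) = ‖x‖⁻¹ • x := by
  rw [norm_smul, norm_of_nonneg hr.le, smul_smul, mul_inv_rev, mul_assoc,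
    inv_mul_cancel₀ hr.ne', mul_one]

lemma inner_deriv_eq_zero_of_norm_eq {f : ℝ → F} {r : ℝ} (hf : ∀ t, ‖f t‖ = r) {t : ℝ}
    (hd : DifferentiableAt ℝ f t) : ⟪f t, deriv f t⟫ = 0 := by
  have hconst : (fun t => ⟪f t, f t⟫) = fun _ => r ^ 2 := by
    funext t
    rw [real_inner_self_eq_norm_sq, hf]
  have h := hd.hasDerivAt.inner ℝ hd.hasDerivAt
  rw [hconst, real_inner_comm (f t) (deriv f t)] at h
  linarith [h.unique (hasDerivAt_const t (r ^ 2))]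

end

section AssociatedCurve

variable {F : Type*} [NormedAddCommGroup F] [NormedSpace ℝ F]

noncomputable def associatedCurve (α : ℝ → F) (θ s₀ : ℝ) (a : F) (s : ℝ) : F :=
  α s₀ + sin θ • α s + ((s - s₀) * cos θ) • a

variable {α : ℝ → F} (θ s₀ : ℝ) (a : F)

lemma deriv_associatedCurve (hα : Differentiable ℝ α) :
    deriv (associatedCurve α θ s₀ a) = fun s => sin θ • deriv α s + cos θ • a := by
  funext s
  have hline : HasDerivAt (fun s => (s - s₀) * cos θ) (cos θ) s := by
    simpa using ((hasDerivAt_id s).sub_const s₀).mul_const (cos θ)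
  exact ((((hα s).hasDerivAt.const_smul (sin θ)).const_add (α s₀)).add
    (hline.smul_const a)).deriv

lemma deriv_deriv_associatedCurve (hα : Differentiable ℝ α) (s : ℝ) :
    deriv (deriv (associatedCurve α θ s₀ a)) s = sin θ • deriv (deriv α) s := by
  rw [deriv_associatedCurve θ s₀ a hα, deriv_add_const, deriv_fun_const_smul_field]

end AssociatedCurve

theorem binormal_of_associated_curve
    (α : ℝ → EuclideanSpace ℝ (Fin 3))
    (hα : ContDiff ℝ 2 α)
    (T N B : ℝ → EuclideanSpace ℝ (Fin 3)) (κ : ℝ → ℝ)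
    (hT : ∀ s, T s = deriv α s)
    (hunit : ∀ s, ‖deriv α s‖ = 1)
    (hκ : ∀ s, κ s = ‖deriv (deriv α) s‖)
    (hκpos : ∀ s, 0 < κ s)
    (hN : ∀ s, N s = (κ s)⁻¹ • deriv (deriv α) s)
    (hB : ∀ s, B s = cross3 (T s) (N s))
    (θ : ℝ) (hθ : 0 < Real.sin θ)
    (a : EuclideanSpace ℝ (Fin 3))
    (ha : ∀ s, a = Real.cos θ • T s + Real.sin θ • B s)
    (s₀ : ℝ)
    (ᾱ : ℝ → EuclideanSpace ℝ (Fin 3))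
    (hᾱ : ∀ s, ᾱ s = α s₀ + Real.sin θ • α s + ((s - s₀) * Real.cos θ) • a)
    (B' : ℝ → EuclideanSpace ℝ (Fin 3))
    (hB' : ∀ s, B' s = ‖cross3 (deriv ᾱ s) (deriv (deriv ᾱ) s)‖⁻¹ •
        cross3 (deriv ᾱ s) (deriv (deriv ᾱ) s)) :
    ∀ s, B' s =
      (Real.sqrt (1 + 2 * Real.sin θ * Real.cos θ ^ 2))⁻¹ •
        ((-(Real.sin θ * Real.cos θ)) • T s + (Real.sin θ + Real.cos θ ^ 2) • B s) := by
  intro s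
  have hα' : Differentiable ℝ α := hα.differentiable (by norm_num)
  have hᾱ_eq : ᾱ = associatedCurve α θ s₀ a := funext hᾱ
  have hT1 : ‖T s‖ = 1 := by rw [hT, hunit]
  have hN1 : ‖N s‖ = 1 := by
    rw [hN, norm_smul, ← hκ, norm_inv, norm_of_nonneg (hκpos s).le, inv_mul_cancel₀ (hκpos s).ne']
  have hTN : ⟪T s, N s⟫ = 0 := by
    rw [hT, hN, real_inner_smul_right,
      inner_deriv_eq_zero_of_norm_eq hunit (hα.differentiable_deriv_two s), mul_zero]
  have hB1 : ‖B s‖ = 1 := by rw [hB, norm_cross3_of_orthonormal hT1 hN1 hTN]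
  have hTB : ⟪T s, B s⟫ = 0 := by rw [hB, inner_self_cross3]
  have hd1 : deriv ᾱ s = (sin θ + cos θ ^ 2) • T s + (sin θ * cos θ) • B s := by
    rw [hᾱ_eq, deriv_associatedCurve θ s₀ a hα']
    beta_reduce
    rw [ha s, ← hT]
    module
  have hd2 : deriv (deriv ᾱ) s = (sin θ * κ s) • N s := by
    rw [hᾱ_eq, deriv_deriv_associatedCurve θ s₀ a hα', hN, smul_smul, mul_assoc,
      mul_inv_cancel₀ (hκpos s).ne', mul_one]
  have hcross : cross3 (deriv ᾱ s) (deriv (deriv ᾱ) s) = (sin θ * κ s) •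
      ((-(sin θ * cos θ)) • T s + (sin θ + cos θ ^ 2) • B s) := by
    rw [hd1, hd2, cross3_smul_right, hB, cross3_smul_add_smul_cross3 hN1 hTN]
  have hnorm : ‖(-(sin θ * cos θ)) • T s + (sin θ + cos θ ^ 2) • B s‖ =
      √(1 + 2 * sin θ * cos θ ^ 2) := by
    rw [norm_smul_add_smul_of_orthonormal hT1 hB1 hTB]
    congr 1
    linear_combination (1 + cos θ ^ 2) * sin_sq_add_cos_sq θ
  rw [hB', hcross, inv_norm_smul_smul_of_pos (mul_pos hθ (hκpos s)), hnorm]
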